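/- Every ideal J of K{X;r} contains a Gröbner basis: a finite subset G ⊆ J \ {0} such that lm(J) = ⋃_{g∈G, i∈I} T_i(g)·lm_i(g). -/

import Mathlib

/-- The real number `r · u` for `r ∈ ℚⁿ` and `u ∈ ℤⁿ`. -/
noncomputable def rdot {n : ℕ} (r : Fin n → ℚ) (u : Fin n → ℤ) : ℝ :=
  ∑ k, (r k : ℝ) * (u k : ℝ)

/-- A Laurent series `Σ a_u X^u` (given by its coefficient function) lies in `K{X;r}`
iff `val(a_u) − r·u → +∞`, i.e. for each `C` only finitely many nonzero terms have
`val(a_u) − r·u < C`. -/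
def Converges {n : ℕ} {K : Type} [Zero K] (val : K → ℝ) (r : Fin n → ℚ)
    (f : (Fin n → ℤ) → K) : Prop :=
  ∀ C : ℝ, {u : Fin n → ℤ | f u ≠ 0 ∧ val (f u) - rdot r u < C}.Finite

/-- Multiplication of `f` by the monomial `X^t`: the coefficients get shifted. -/
def shift {n : ℕ} {K : Type} (t : Fin n → ℤ) (f : (Fin n → ℤ) → K) : (Fin n → ℤ) → K :=
  fun α => f (α - t)

/-- Multiplication in `K{X;r}` (Cauchy product, the inner sums being `tsum`s). -/
noncomputable def lmul {n : ℕ} {K : Type} [Field K] [UniformSpace K]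
    (g f : (Fin n → ℤ) → K) : (Fin n → ℤ) → K :=
  fun α => ∑' u : Fin n → ℤ, g u * f (α - u)

/-- `IsLM val r lt f m` : `m` is the leading monomial of `f ∈ K{X;r}`, i.e. the largest
monomial, for the generalized monomial order `lt`, of the initial form `in_r(f)`
(the part of `f` of minimal `val_r`-weight `val(a_u) − r·u`). -/
def IsLM {n : ℕ} {K : Type} [Zero K] (val : K → ℝ) (r : Fin n → ℚ)
    (lt : (Fin n → ℤ) → (Fin n → ℤ) → Prop)
    (f : (Fin n → ℤ) → K) (m : Fin n → ℤ) : Prop :=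
  f m ≠ 0 ∧
  (∀ u, f u ≠ 0 → val (f m) - rdot r m ≤ val (f u) - rdot r u) ∧
  (∀ u, f u ≠ 0 → u ≠ m → val (f u) - rdot r u = val (f m) - rdot r m → lt u m)

/-- `rdot` is additive in the integer argument. -/
lemma rdot_add' {n : ℕ} (r : Fin n → ℚ) (u v : Fin n → ℤ) :
    rdot r (u + v) = rdot r u + rdot r v := by
  unfold rdot
  rw [← Finset.sum_add_distrib]
  refine Finset.sum_congr rfl fun k _ => ?_
  have : ((u + v) k : ℝ) = (u k : ℝ) + (v k : ℝ) := by
    simp [Pi.add_apply]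
  rw [this]; ring

/-- Dickson's lemma in basis form: every subset of `σ → ℕ` (σ finite) has a finite
subset of elements below every element. -/
theorem dickson_basis {σ : Type} [Finite σ] (E : Set (σ → ℕ)) :
    ∃ F : Set (σ → ℕ), F.Finite ∧ F ⊆ E ∧ ∀ e ∈ E, ∃ f ∈ F, f ≤ e := by
  classical
  have hpwo : ∀ F : Set (σ → ℕ), F.IsPWO := fun F =>
    Set.isPWO_of_wellQuasiOrderedLE F
  set F := {e ∈ E | ∀ e' ∈ E, ¬ e' < e} with hF
  have hwf : WellFounded ((· < ·) : (σ → ℕ) → (σ → ℕ) → Prop) :=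
    (Set.isWF_univ_iff.mp (hpwo Set.univ).isWF).wf
  refine ⟨F, ?_, fun e he => he.1, ?_⟩
  · refine IsAntichain.finite_of_partiallyWellOrderedOn (r := (· ≤ ·)) ?_ (hpwo F)
    intro a ha b hb hab hle
    exact hb.2 a ha.1 (lt_of_le_of_ne hle hab)
  · intro e he
    obtain ⟨f, hf, hmin⟩ := hwf.has_min {e' ∈ E | e' ≤ e} ⟨e, he, le_refl e⟩
    exact ⟨f, ⟨hf.1, fun e' he' hlt => hmin e' ⟨he', hlt.le.trans hf.2⟩ hlt⟩, hf.2⟩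

/-- If `m` is the leading monomial of `f` and `lt` is compatible with translation by `t`
(above `m`), then `m + t` is the leading monomial of `X^t · f`. -/
lemma isLM_shift {n : ℕ} {K : Type} [Zero K] (val : K → ℝ) (r : Fin n → ℚ)
    (lt : (Fin n → ℤ) → (Fin n → ℤ) → Prop) {f : (Fin n → ℤ) → K} {m t : Fin n → ℤ}
    (hf : IsLM val r lt f m)
    (hlt' : ∀ u, lt u m → lt (u + t) (m + t)) :
    IsLM val r lt (shift t f) (m + t) := by
  obtain ⟨h1, h2, h3⟩ := hf
  have key : ∀ u : Fin n → ℤ, rdot r u = rdot r (u - t) + rdot r t := fun u => by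
    rw [← rdot_add', sub_add_cancel]
  refine ⟨?_, ?_, ?_⟩
  · show f (m + t - t) ≠ 0
    rwa [add_sub_cancel_right]
  · intro u hu
    have h := h2 (u - t) hu
    have e1 : rdot r u = rdot r (u - t) + rdot r t := key u
    have e2 : rdot r (m + t) = rdot r m + rdot r t := by rw [rdot_add']
    show val (f (m + t - t)) - rdot r (m + t) ≤ val (f (u - t)) - rdot r u
    rw [add_sub_cancel_right, e1, e2]
    linarith
  · intro u hu hne heq
    have e1 : rdot r u = rdot r (u - t) + rdot r t := key u
    have e2 : rdot r (m + t) = rdot r m + rdot r t := by rw [rdot_add']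
    have hne' : u - t ≠ m := by
      intro h; apply hne
      have : u - t + t = m + t := by rw [h]
      rwa [sub_add_cancel] at this
    have heq' : val (f (u - t)) - rdot r (u - t) = val (f m) - rdot r m := by
      have hv1 : val (shift t f u) = val (f (u - t)) := rfl
      have hv2 : val (shift t f (m + t)) = val (f m) := by
        show val (f (m + t - t)) = val (f m)
        rw [add_sub_cancel_right]
      rw [hv1, hv2] at heq
      linarith [heq, e1, e2]
    have hlt := h3 (u - t) hu hne' heq'
    have := hlt' (u - t) hlt
    rwa [sub_add_cancel] at this

/-- every ideal `J` of `K{X;r}` contains a Gröbner basis: a finite subset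
`G ⊆ J \ {0}` such that `lm(J) = ⋃_{g∈G, i∈I} T_i(g)·lm_i(g)`; here
`T_i(g)·lm_i(g) = {lm(X^t g) : t ∈ T_i(g)} = {m ∈ T_i : ∃ t, lm(X^t g) = m}`. -/
theorem ideal_has_groebner_basis
    (n : ℕ) (K : Type) [Field K] [UniformSpace K] [CompleteSpace K]
    (val : K → ℝ)
    (hvmul : ∀ a b : K, a ≠ 0 → b ≠ 0 → val (a * b) = val a + val b)
    (hvadd : ∀ a b : K, a ≠ 0 → b ≠ 0 → a + b ≠ 0 → min (val a) (val b) ≤ val (a + b))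
    (hdisc : ∀ a : K, a ≠ 0 → ∃ z : ℤ, val a = (z : ℝ))
    (r : Fin n → ℚ)
    (I : Type) [Finite I] (T : I → AddSubmonoid (Fin n → ℤ))
    (hFG : ∀ i, (T i).FG)
    (hunit : ∀ i, ∀ v ∈ T i, -v ∈ T i → v = 0)
    (hgen : ∀ i, AddSubgroup.closure (T i : Set (Fin n → ℤ)) = ⊤)
    (hcover : ∀ v : Fin n → ℤ, ∃ i, v ∈ T i)
    (lt : (Fin n → ℤ) → (Fin n → ℤ) → Prop)
    (hlt : IsStrictTotalOrder (Fin n → ℤ) lt)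
    (hzero : ∀ v : Fin n → ℤ, v = 0 ∨ lt 0 v)
    (hcompat : ∀ ρ : Fin n → ℤ, ∀ i, ∀ s ∈ T i, ∀ t ∈ T i, lt ρ s → lt (ρ + t) (s + t))
    (J : Set ((Fin n → ℤ) → K))
    (hJconv : ∀ f ∈ J, Converges val r f)
    (hJzero : (0 : (Fin n → ℤ) → K) ∈ J)
    (hJadd : ∀ f ∈ J, ∀ g ∈ J, f + g ∈ J)
    (hJneg : ∀ f ∈ J, -f ∈ J)
    (hJmul : ∀ f ∈ J, ∀ g : (Fin n → ℤ) → K, Converges val r g → lmul g f ∈ J) :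
    ∃ G : Set ((Fin n → ℤ) → K), G.Finite ∧ G ⊆ J ∧ (∀ g ∈ G, g ≠ 0) ∧
      {m | ∃ f ∈ J, f ≠ 0 ∧ IsLM val r lt f m} =
        {m | ∃ g ∈ G, ∃ i : I, m ∈ T i ∧ ∃ t, IsLM val r lt (shift t g) m} := by
  classical
  set S : Set (Fin n → ℤ) := {m | ∃ f ∈ J, f ≠ 0 ∧ IsLM val r lt f m} with hSdef
  -- J is closed under monomial shifts
  have hshiftJ : ∀ (t : Fin n → ℤ), ∀ f ∈ J, shift t f ∈ J := by
    intro t f hf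
    set δ : (Fin n → ℤ) → K := fun u => if u = t then 1 else 0 with hδ
    have hδconv : Converges val r δ := by
      intro C
      apply Set.Finite.subset (Set.finite_singleton t)
      intro u hu
      by_contra hne
      simp only [Set.mem_singleton_iff] at hne
      exact hu.1 (if_neg hne)
    have : lmul δ f = shift t f := by
      funext α
      show (∑' u : Fin n → ℤ, δ u * f (α - u)) = f (α - t)
      have hsupp : Function.support (fun u : Fin n → ℤ => δ u * f (α - u)) ⊆ {t} := by
        intro u hu
        by_contra hne
        simp only [Set.mem_singleton_iff] at hne
        apply hu
        simp [hδ, if_neg hne]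
      rw [tsum_eq_finsum (Set.Finite.subset (Set.finite_singleton t) hsupp)]
      rw [finsum_eq_single _ t (fun u hu => by simp [hδ, if_neg hu])]
      simp [hδ]
    rw [← this]
    exact hJmul f hf δ hδconv
  -- S is stable under adding cone elements
  have hSstab : ∀ i, ∀ m ∈ S, m ∈ T i → ∀ t ∈ T i, m + t ∈ S := by
    rintro i m ⟨f, hfJ, hf0, hflm⟩ hm t ht
    have hlm' : IsLM val r lt (shift t f) (m + t) :=
      isLM_shift val r lt hflm (fun u hu => hcompat u i m hm t ht hu)
    refine ⟨shift t f, hshiftJ t f hfJ, ?_, hlm'⟩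
    intro h
    exact hlm'.1 (by rw [h]; rfl)
  -- generators of the cones
  choose s hs using hFG
  -- φ i e = Σ e_b • b, the ℕ-combination of generators
  set φ : ∀ i : I, ({x // x ∈ s i} → ℕ) → (Fin n → ℤ) :=
    fun i e => ∑ b : {x // x ∈ s i}, e b • (b : Fin n → ℤ) with hφ
  have hφmem : ∀ i e, φ i e ∈ T i := by
    intro i e
    rw [← hs i]
    exact AddSubmonoid.sum_mem _ fun b _ =>
      AddSubmonoid.nsmul_mem _ (AddSubmonoid.subset_closure b.2) _
  have hφadd : ∀ i e₁ e₂, φ i (e₁ + e₂) = φ i e₁ + φ i e₂ := by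
    intro i e₁ e₂
    simp only [hφ, Pi.add_apply, add_smul]
    rw [← Finset.sum_add_distrib]
  have hφsurj : ∀ i, ∀ m ∈ T i, ∃ e, φ i e = m := by
    intro i m hm
    rw [← hs i] at hm
    induction hm using AddSubmonoid.closure_induction with
    | mem x hx =>
        refine ⟨fun b => if (b : Fin n → ℤ) = x then 1 else 0, ?_⟩
        show (∑ b : {x // x ∈ s i},
          (if (b : Fin n → ℤ) = x then 1 else 0) • (b : Fin n → ℤ)) = x
        rw [Finset.sum_eq_single (⟨x, hx⟩ : {x // x ∈ s i})]
        · simp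
        · intro b _ hb
          have hbx : (b : Fin n → ℤ) ≠ x := by
            intro h; apply hb; exact Subtype.ext h
          simp [hbx]
        · intro h; exact absurd (Finset.mem_univ _) h
    | zero =>
        refine ⟨0, ?_⟩
        show (∑ b : {x // x ∈ s i}, (0 : ℕ) • (b : Fin n → ℤ)) = 0
        simp
    | add x y _ _ hx hy =>
        obtain ⟨ex, hex⟩ := hx
        obtain ⟨ey, hey⟩ := hy
        exact ⟨ex + ey, by rw [hφadd, hex, hey]⟩
  -- the exponent sets and their Dickson bases
  set E : ∀ i : I, Set ({x // x ∈ s i} → ℕ) := fun i => {e | φ i e ∈ S} with hE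
  choose F hFfin hFsub hFbasis using fun i => dickson_basis (E i)
  -- witnesses
  set w : ∀ i : I, ({x // x ∈ s i} → ℕ) → ((Fin n → ℤ) → K) := fun i e =>
    if h : ∃ g, g ∈ J ∧ g ≠ 0 ∧ IsLM val r lt g (φ i e) then h.choose else 0 with hw
  have hwspec : ∀ i, ∀ e ∈ F i, w i e ∈ J ∧ w i e ≠ 0 ∧ IsLM val r lt (w i e) (φ i e) := by
    intro i e he
    have hmem : φ i e ∈ S := hFsub i he
    obtain ⟨g, hgJ, hg0, hglm⟩ := hmem
    have hex : ∃ g, g ∈ J ∧ g ≠ 0 ∧ IsLM val r lt g (φ i e) := ⟨g, hgJ, hg0, hglm⟩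
    rw [hw]; simp only [dif_pos hex]
    exact hex.choose_spec
  refine ⟨⋃ i : I, (w i) '' (F i), ?_, ?_, ?_, ?_⟩
  · exact Set.finite_iUnion fun i => (hFfin i).image _
  · rintro g hg
    obtain ⟨i, ⟨e, he, rfl⟩⟩ := Set.mem_iUnion.mp hg
    exact (hwspec i e he).1
  · rintro g hg
    obtain ⟨i, ⟨e, he, rfl⟩⟩ := Set.mem_iUnion.mp hg
    exact (hwspec i e he).2.1
  · ext m
    constructor
    · intro hm
      obtain ⟨i, hmi⟩ := hcover m
      obtain ⟨e, hφe⟩ := hφsurj i m hmi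
      have heE : e ∈ E i := by rw [hE]; simp only [Set.mem_setOf_eq, hφe]; exact hm
      obtain ⟨e₀, he₀F, he₀le⟩ := hFbasis i e heE
      obtain ⟨hwJ, hw0, hwlm⟩ := hwspec i e₀ he₀F
      set t : Fin n → ℤ := φ i (e - e₀) with ht
      have harg : e₀ + (e - e₀) = e := by
        funext b
        have hb : e₀ b ≤ e b := he₀le b
        simp only [Pi.add_apply, Pi.sub_apply]
        exact Nat.add_sub_cancel' hb
      have hsum : φ i e₀ + t = m := by
        rw [ht, ← hφadd, harg, hφe]
      have hlm' : IsLM val r lt (shift t (w i e₀)) (φ i e₀ + t) :=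
        isLM_shift val r lt hwlm
          (fun u hu => hcompat u i (φ i e₀) (hφmem i e₀) t (hφmem i _) hu)
      rw [hsum] at hlm'
      exact ⟨w i e₀, Set.mem_iUnion.mpr ⟨i, ⟨e₀, he₀F, rfl⟩⟩, i, hmi, t, hlm'⟩
    · rintro ⟨g, hgG, i, hmi, t, hglm⟩
      obtain ⟨i', ⟨e, he, rfl⟩⟩ := Set.mem_iUnion.mp hgG
      refine ⟨shift t (w i' e), hshiftJ t _ (hwspec i' e he).1, ?_, hglm⟩
      intro h
      exact hglm.1 (by rw [h]; rfl)
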